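/- Let α be a real number with 1 ≤ α ≤ (1 + √85)/6. Define m₁ = 0, m₂ = 2/5, m₃ = 3/5, m₄ = 1, and s₁ = (2/5)α + 1/5 + 2/(5α), s₂ = 4/(5α) + 1/5, s₃ = 3/(5α) + 2/(5α²), s₄ = 0. Then for all nonnegative reals x₁, x₂, x₃, x₄ with x₁ + x₂ + x₃ + x₄ ≥ 1, one has max(m₁x₁ + m₂x₂ + m₃x₃ + m₄x₄, s₁x₁ + s₂x₂ + s₃x₃ + s₄x₄) ≥ (2α + 1 + 2/α)/(2α + 6 + 2/α). -/
import Mathlib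


set_option maxHeartbeats 1000000 in
theorem factor_revealing_lp_value (α : ℝ) (h1 : 1 ≤ α) (h2 : α ≤ (1 + Real.sqrt 85) / 6)
    (m₁ m₂ m₃ m₄ s₁ s₂ s₃ s₄ : ℝ)
    (hm₁ : m₁ = 0) (hm₂ : m₂ = 2/5) (hm₃ : m₃ = 3/5) (hm₄ : m₄ = 1)
    (hs₁ : s₁ = (2/5)*α + 1/5 + 2/(5*α)) (hs₂ : s₂ = 4/(5*α) + 1/5)
    (hs₃ : s₃ = 3/(5*α) + 2/(5*α^2)) (hs₄ : s₄ = 0)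
    (x₁ x₂ x₃ x₄ : ℝ) (hx₁ : 0 ≤ x₁) (hx₂ : 0 ≤ x₂) (hx₃ : 0 ≤ x₃) (hx₄ : 0 ≤ x₄)
    (hsum : x₁ + x₂ + x₃ + x₄ ≥ 1) :
    max (m₁*x₁ + m₂*x₂ + m₃*x₃ + m₄*x₄) (s₁*x₁ + s₂*x₂ + s₃*x₃ + s₄*x₄) ≥
      (2*α + 1 + 2/α) / (2*α + 6 + 2/α) := by
  subst hm₁ hm₂ hm₃ hm₄ hs₁ hs₂ hs₃ hs₄
  have hα : (0:ℝ) < α := lt_of_lt_of_le one_pos h1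
  have hs85 : Real.sqrt 85 ^ 2 = 85 := Real.sq_sqrt (by norm_num)
  have hsnn : 0 ≤ Real.sqrt 85 := Real.sqrt_nonneg 85
  have hq : 3*α^2 - α - 7 ≤ 0 := by nlinarith [sq_nonneg (Real.sqrt 85 - 6*α + 1)]
  have hA : (0:ℝ) < 2*α + 1 + 2/α := by positivity
  have hD : (0:ℝ) < 2*α + 6 + 2/α := by positivity
  -- coordinate inequalities
  have hC2 : (3/5)*(2*α + 1 + 2/α) ≤ 4/α + 1 := by
    have e : 4/α + 1 - (3/5)*(2*α + 1 + 2/α) = 2*(7 + α - 3*α^2)/(5*α) := by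
      field_simp; ring
    have hnum : 0 ≤ 2*(7 + α - 3*α^2)/(5*α) := by
      apply div_nonneg _ (by positivity)
      nlinarith
    linarith
  have hC3 : (2/5)*(2*α + 1 + 2/α) ≤ 3/α + 2/α^2 := by
    have e : 3/α + 2/α^2 - (2/5)*(2*α + 1 + 2/α) = (11*α + 10 - 4*α^3 - 2*α^2)/(5*α^2) := by
      field_simp; ring
    have hnum : 0 ≤ (11*α + 10 - 4*α^3 - 2*α^2)/(5*α^2) := by
      apply div_nonneg _ (by positivity)
      nlinarith [mul_nonneg hα.le (by nlinarith : (0:ℝ) ≤ 7 + α - 3*α^2)]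
    linarith
  -- key combined inequality
  have key : (2*α + 1 + 2/α) ≤
      (0*x₁ + 2/5*x₂ + 3/5*x₃ + 1*x₄)*(2*α + 1 + 2/α)
      + 5*(((2/5)*α + 1/5 + 2/(5*α))*x₁ + (4/(5*α) + 1/5)*x₂
          + (3/(5*α) + 2/(5*α^2))*x₃ + 0*x₄) := by
    have e1 : 5*((2/5)*α + 1/5 + 2/(5*α)) = 2*α + 1 + 2/α := by ring
    have e2 : 5*(4/(5*α) + 1/5) = 4/α + 1 := by ring
    have e3 : 5*(3/(5*α) + 2/(5*α^2)) = 3/α + 2/α^2 := by ring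
    nlinarith [mul_le_mul_of_nonneg_left hC2 hx₂, mul_le_mul_of_nonneg_left hC3 hx₃,
      mul_le_mul_of_nonneg_right hsum hA.le]
  rw [ge_iff_le, div_le_iff₀ hD]
  have hM := le_max_left (0*x₁ + 2/5*x₂ + 3/5*x₃ + 1*x₄)
    (((2/5)*α + 1/5 + 2/(5*α))*x₁ + (4/(5*α) + 1/5)*x₂ + (3/(5*α) + 2/(5*α^2))*x₃ + 0*x₄)
  have hS := le_max_right (0*x₁ + 2/5*x₂ + 3/5*x₃ + 1*x₄)
    (((2/5)*α + 1/5 + 2/(5*α))*x₁ + (4/(5*α) + 1/5)*x₂ + (3/(5*α) + 2/(5*α^2))*x₃ + 0*x₄)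
  nlinarith [mul_le_mul_of_nonneg_right hM hA.le, hS, key]
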